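/- arXiv:math/0702053 — 3 statements merged into one kernel-verified Lean document; each statement's English description precedes it below -/
import Mathlib

section
/- Let d ≥ 3, ρ > ρ_c, and define Q̂_n(k) = Q̂*(k) for k ≠ n and Q̂_n(n) = Q̂*(n) + (ρ−ρ_c)/(nρ). Then \sum_{k=1}^∞ k·Q̂_n(k) = 1 for every n, Q̂_n → Q̂* pointwise as n → ∞, and S(Q_n) = S(Q*) − (ρ−ρ_c)/(nρ) + (Q̂*(n) + (ρ−ρ_c)/(nρ))·log(1 + (ρ−ρ_c)/(nρ Q̂*(n))) → S(Q*) as n → ∞. -/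
/-! Q̂_n differs from Q̂* only at k = n, so each series changes by a single term: the mass
constraint holds because `∑ k Q̂*(k) = ρ_c/ρ` and the added term carries `n·(ρ-ρ_c)/(nρ)`.
Since `Q̂*(n) ≍ n^{-1-d/2}`, the factor `Q̂*(n) + (ρ-ρ_c)/(nρ)` is `O(1/n)` while the logarithm
is `O(log n)`, so the entropy correction vanishes. -/

open Real Filter Function Topology

theorem tsum_comp_update_succ {α β : Type*} [AddCommGroup α] [TopologicalSpace α]
    [IsTopologicalAddGroup α] [T2Space α] {φ : ℕ → β → α} {f : ℕ → β}
    (hf : Summable fun k => φ (k + 1) (f (k + 1))) {n : ℕ} (hn : 1 ≤ n) (c : β) :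
    ∑' k, φ (k + 1) (update f n c (k + 1)) = ∑' k, φ (k + 1) (f (k + 1)) - φ n (f n) + φ n c := by
  have hshift : (fun k => φ (k + 1) (update f n c (k + 1)))
      = update (fun k => φ (k + 1) (f (k + 1))) (n - 1) (φ n c) := by
    funext k
    rcases eq_or_ne k (n - 1) with rfl | hk
    · simp [Nat.sub_add_cancel hn]
    · rw [update_of_ne hk, update_of_ne (by omega)]
  rw [hshift, (hf.hasSum.update (n - 1) (φ n c)).tsum_eq, Nat.sub_add_cancel hn]
  abel

theorem tsum_succ_mul_update {Q : ℕ → ℝ} {m : ℝ}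
    (hQ : HasSum (fun k : ℕ => ((k : ℝ) + 1) * Q (k + 1)) m) {n : ℕ} (hn : 1 ≤ n) (c : ℝ) :
    ∑' k : ℕ, ((k : ℝ) + 1) * update Q n c (k + 1) = m - n * Q n + n * c := by
  simp_rw [← Nat.cast_add_one] at hQ ⊢
  rw [tsum_comp_update_succ (φ := fun k x => (k : ℝ) * x) hQ.summable hn, hQ.tsum_eq]

theorem mul_log_div_self_sub_one (x : ℝ) : x * (log (x / x) - 1) = -x := by
  rcases eq_or_ne x 0 with rfl | hx
  · simp
  · simp [hx]

theorem tsum_update_mul_log_div_sub_one {Q : ℕ → ℝ} (hQ : Summable fun k => Q (k + 1))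
    {n : ℕ} (hn : 1 ≤ n) (hQn : Q n ≠ 0) (ε : ℝ) :
    ∑' k : ℕ, update Q n (Q n + ε) (k + 1) * (log (update Q n (Q n + ε) (k + 1) / Q (k + 1)) - 1)
      = ∑' k : ℕ, Q (k + 1) * (log (Q (k + 1) / Q (k + 1)) - 1) - ε
        + (Q n + ε) * log (1 + ε / Q n) := by
  have hsum : Summable fun k => Q (k + 1) * (log (Q (k + 1) / Q (k + 1)) - 1) := by
    simpa only [mul_log_div_self_sub_one] using hQ.neg
  rw [tsum_comp_update_succ (φ := fun k x => x * (log (x / Q k) - 1)) hsum hn,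
    mul_log_div_self_sub_one, add_div, div_self hQn]
  ring

theorem summable_nat_add_one_rpow {p : ℝ} (hp : p < -1) :
    Summable fun k : ℕ => ((k : ℝ) + 1) ^ p := by
  simpa using (summable_nat_add_iff 1).2 (Real.summable_nat_rpow.2 hp)

theorem tendsto_log_one_add_mul_rpow_div {B q : ℝ} (hB : 0 ≤ B) (hq : 0 ≤ q) :
    Tendsto (fun n : ℕ => log (1 + B * (n : ℝ) ^ q) / n) atTop (𝓝 0) := by
  have hlog : Tendsto (fun n : ℕ => log (n : ℝ) / n) atTop (𝓝 0) :=
    isLittleO_log_id_atTop.tendsto_div_nhds_zero.comp tendsto_natCast_atTop_atTop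
  have hbound := (tendsto_const_div_atTop_nhds_zero_nat (log (1 + B))).add (hlog.const_mul q)
  rw [zero_add, mul_zero] at hbound
  refine squeeze_zero' ?_ ?_ hbound
  · filter_upwards with n
    exact div_nonneg (log_nonneg (le_add_of_nonneg_right (by positivity))) n.cast_nonneg
  · filter_upwards [eventually_ge_atTop 1] with n hn
    have hn' : (1 : ℝ) ≤ n := by exact_mod_cast hn
    have hnq : 1 ≤ (n : ℝ) ^ q := one_le_rpow hn' hq
    have hle : log (1 + B * (n : ℝ) ^ q) ≤ log (1 + B) + q * log n := by
      calc log (1 + B * (n : ℝ) ^ q) ≤ log ((1 + B) * (n : ℝ) ^ q) :=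
            log_le_log (by positivity) (by nlinarith)
        _ = log (1 + B) + q * log n := by
            rw [log_mul (by positivity) (by positivity), log_rpow (by positivity)]
    calc log (1 + B * (n : ℝ) ^ q) / n ≤ (log (1 + B) + q * log n) / n :=
          div_le_div_of_nonneg_right hle n.cast_nonneg
      _ = log (1 + B) / n + q * (log n / n) := by ring

theorem tendsto_rpow_add_div_mul_log_one_add {C e p : ℝ} (hC : 0 < C) (he : 0 ≤ e)
    (hp : 1 ≤ p) :
    Tendsto (fun n : ℕ => (C * (n : ℝ) ^ (-p) + e / n) * log (1 + e / n / (C * (n : ℝ) ^ (-p))))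
      atTop (𝓝 0) := by
  have hratio (n : ℕ) (hn : 1 ≤ n) : e / n / (C * (n : ℝ) ^ (-p)) = e / C * (n : ℝ) ^ (p - 1) := by
    have hn0 : (0 : ℝ) < n := by exact_mod_cast hn
    rw [rpow_sub hn0, rpow_neg hn0.le, rpow_one]
    field_simp
  have hlog (n : ℕ) : 0 ≤ log (1 + e / C * (n : ℝ) ^ (p - 1)) :=
    log_nonneg (le_add_of_nonneg_right (by positivity))
  have hbound := (tendsto_log_one_add_mul_rpow_div (div_nonneg he hC.le)
    (sub_nonneg.2 hp)).const_mul (C + e)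
  rw [mul_zero] at hbound
  refine squeeze_zero' ?_ ?_ hbound
  · filter_upwards [eventually_ge_atTop 1] with n hn
    rw [hratio n hn]
    exact mul_nonneg (by positivity) (hlog n)
  · filter_upwards [eventually_ge_atTop 1] with n hn
    have hpow : (n : ℝ) ^ (-p) ≤ (n : ℝ)⁻¹ := by
      rw [← rpow_neg_one]
      exact rpow_le_rpow_of_exponent_le (by exact_mod_cast hn) (by linarith)
    have hcoeff : C * (n : ℝ) ^ (-p) + e / n ≤ (C + e) / n := by
      rw [add_div, div_eq_mul_inv C]
      gcongr
    rw [hratio n hn, mul_div_assoc']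
    calc _ ≤ (C + e) / n * log (1 + e / C * (n : ℝ) ^ (p - 1)) :=
          mul_le_mul_of_nonneg_right hcoeff (hlog n)
      _ = _ := div_mul_eq_mul_div _ _ _

section Qstar

variable {β ρ ρc : ℝ} {d : ℕ} {Qstar : ℕ → ℝ}

theorem critical_density_nonneg (hβ : 0 < β)
    (hρc : ρc = (4 * π * β) ^ (-(d : ℝ) / 2) * (∑' k : ℕ, ((k : ℝ) + 1) ^ (-(d : ℝ) / 2))) :
    0 ≤ ρc := by
  rw [hρc]
  exact mul_nonneg (by positivity) (tsum_nonneg fun k => by positivity)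

theorem hasSum_succ_mul_Qstar (hβ : 0 < β) (hd : 3 ≤ d)
    (hρc : ρc = (4 * π * β) ^ (-(d : ℝ) / 2) * (∑' k : ℕ, ((k : ℝ) + 1) ^ (-(d : ℝ) / 2)))
    (hQstar : ∀ k : ℕ,
      Qstar k = (k : ℝ) ^ (-(1 + (d : ℝ) / 2)) / (ρ * (4 * π * β) ^ ((d : ℝ) / 2))) :
    HasSum (fun k : ℕ => ((k : ℝ) + 1) * Qstar (k + 1)) (ρc / ρ) := by
  have hd' : (3 : ℝ) ≤ d := by exact_mod_cast hd
  have hsum := summable_nat_add_one_rpow (p := -(d : ℝ) / 2) (by linarith)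
  have hval : ρc / ρ = (∑' k : ℕ, ((k : ℝ) + 1) ^ (-(d : ℝ) / 2))
      / (ρ * (4 * π * β) ^ ((d : ℝ) / 2)) := by
    rw [hρc, neg_div, rpow_neg (by positivity)]
    field_simp
  rw [hval]
  refine (hsum.hasSum.div_const _).congr_fun fun k => ?_
  have hk : (0 : ℝ) < k + 1 := by positivity
  rw [hQstar, ← mul_div_assoc, Nat.cast_add_one, show -(d : ℝ) / 2 = -(1 + d / 2) + 1 by ring,
    rpow_add_one hk.ne', mul_comm]

theorem Qstar_pos (hβ : 0 < β) (hρ0 : 0 < ρ)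
    (hQstar : ∀ k : ℕ,
      Qstar k = (k : ℝ) ^ (-(1 + (d : ℝ) / 2)) / (ρ * (4 * π * β) ^ ((d : ℝ) / 2)))
    {n : ℕ} (hn : 1 ≤ n) : 0 < Qstar n := by
  have : (0 : ℝ) < n := by exact_mod_cast hn
  rw [hQstar]
  positivity

theorem tendsto_Qstar_add_mul_log_one_add (hβ : 0 < β) (hρ0 : 0 < ρ) (hρ : ρc ≤ ρ)
    (hQstar : ∀ k : ℕ,
      Qstar k = (k : ℝ) ^ (-(1 + (d : ℝ) / 2)) / (ρ * (4 * π * β) ^ ((d : ℝ) / 2))) :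
    Tendsto (fun n : ℕ => (Qstar n + (ρ - ρc) / (n * ρ))
      * log (1 + (ρ - ρc) / (n * ρ * Qstar n))) atTop (𝓝 0) := by
  have hT := tendsto_rpow_add_div_mul_log_one_add (C := (ρ * (4 * π * β) ^ ((d : ℝ) / 2))⁻¹)
    (e := (ρ - ρc) / ρ) (p := 1 + d / 2) (by positivity) (div_nonneg (sub_nonneg.2 hρ) hρ0.le)
    (le_add_of_nonneg_right (by positivity))
  refine hT.congr fun n => ?_
  rw [hQstar]
  ring_nf

end Qstar

/-- For `d ≥ 3` and `ρ > ρ_c`, the sequence `Q̂_n` obtained from `Q̂*` by adding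
mass `(ρ-ρ_c)/(nρ)` at `k = n` satisfies `∑_k k·Q̂_n(k) = 1` for every `n ≥ 1`,
converges pointwise to `Q̂*`, and its entropy functional value
`S(Q_n) = S(Q*) - (ρ-ρ_c)/(nρ) + (Q̂*(n) + (ρ-ρ_c)/(nρ))·log(1 + (ρ-ρ_c)/(nρ·Q̂*(n)))`
tends to `S(Q*)` as `n → ∞`. -/
theorem minimising_sequence (β ρ : ℝ) (hβ : 0 < β) (d : ℕ) (hd : 3 ≤ d)
    (ρc : ℝ)
    (hρc : ρc = (4 * π * β) ^ (-(d : ℝ) / 2) * (∑' k : ℕ, ((k : ℝ) + 1) ^ (-(d : ℝ) / 2)))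
    (hρ : ρc < ρ)
    (Qstar : ℕ → ℝ)
    (hQstar : ∀ k : ℕ, Qstar k = (k : ℝ) ^ (-(1 + (d : ℝ) / 2)) / (ρ * (4 * π * β) ^ ((d : ℝ) / 2)))
    (Qn : ℕ → ℕ → ℝ)
    (hQn : ∀ n k : ℕ, Qn n k = if k = n then Qstar k + (ρ - ρc) / (n * ρ) else Qstar k)
    (S : (ℕ → ℝ) → ℝ)
    (hS : ∀ Q : ℕ → ℝ,
      S Q = ∑' k : ℕ, Q (k + 1) * (Real.log (Q (k + 1) / Qstar (k + 1)) - 1)) :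
    (∀ n : ℕ, 1 ≤ n → (∑' k : ℕ, ((k : ℝ) + 1) * Qn n (k + 1)) = 1) ∧
    (∀ k : ℕ, Tendsto (fun n => Qn n k) atTop (nhds (Qstar k))) ∧
    (∀ n : ℕ, 1 ≤ n →
      S (Qn n) = S Qstar - (ρ - ρc) / (n * ρ)
        + (Qstar n + (ρ - ρc) / (n * ρ))
          * Real.log (1 + (ρ - ρc) / (n * ρ * Qstar n))) ∧
    Tendsto (fun n => S (Qn n)) atTop (nhds (S Qstar)) := by
  have hρ0 : 0 < ρ := (critical_density_nonneg hβ hρc).trans_lt hρ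
  have hmass := hasSum_succ_mul_Qstar hβ hd hρc hQstar
  have hQpos (n : ℕ) (hn : 1 ≤ n) : 0 < Qstar n := Qstar_pos hβ hρ0 hQstar hn
  have hQn' (n : ℕ) : Qn n = update Qstar n (Qstar n + (ρ - ρc) / (n * ρ)) := by
    funext k
    rw [hQn, update_apply]
    split_ifs with h <;> simp [h]
  have hentropy (n : ℕ) (hn : 1 ≤ n) : S (Qn n) = S Qstar - (ρ - ρc) / (n * ρ)
      + (Qstar n + (ρ - ρc) / (n * ρ)) * Real.log (1 + (ρ - ρc) / (n * ρ * Qstar n)) := by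
    have hQsum : Summable fun k => Qstar (k + 1) :=
      hmass.summable.of_nonneg_of_le (fun k => (hQpos _ k.succ_pos).le)
        fun k => le_mul_of_one_le_left (hQpos _ k.succ_pos).le (by simp)
    rw [hS, hS, hQn', tsum_update_mul_log_div_sub_one hQsum hn (hQpos n hn).ne', div_div]
  refine ⟨fun n hn => ?_, fun k => ?_, hentropy, ?_⟩
  · rw [hQn', tsum_succ_mul_update hmass hn]
    field_simp
    ring
  · refine tendsto_const_nhds.congr' ?_
    filter_upwards [eventually_gt_atTop k] with n hn
    rw [hQn, if_neg hn.ne]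
  · have hε : Tendsto (fun n : ℕ => (ρ - ρc) / (n * ρ)) atTop (𝓝 0) :=
      tendsto_const_nhds.div_atTop (tendsto_natCast_atTop_atTop.atTop_mul_const hρ0)
    have hlim := ((tendsto_const_nhds (x := S Qstar)).sub hε).add
      (tendsto_Qstar_add_mul_log_one_add hβ hρ0 hρ.le hQstar)
    rw [sub_zero, add_zero] at hlim
    exact hlim.congr' (eventually_atTop.2 ⟨1, fun n hn => (hentropy n hn).symm⟩)
end

section
/- Given a probability measure Q on ℕ with Q(l) ≥ Q(l+1) for all l, and α ∈ (0,1), define Q_N(1) = 1 − \sum_{k=2}^{⌊N^α⌋} ⌊N·Q(k)⌋/N, Q_N(k) = ⌊N·Q(k)⌋/N for 2 ≤ k ≤ ⌊N^α⌋, and Q_N(k) = 0 otherwise. Then Q_N is a non-increasing probability function on ℕ with values in {0, 1/N, ..., 1}, and \sum_{k=1}^∞ |Q(k) − Q_N(k)| ≤ 2(N^{α−1} + \sum_{k > ⌊N^α⌋} Q(k)); in particular Q_N → Q in ℓ¹ as N → ∞. -/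
open Real Filter Finset Topology

/-!
Rounding each `Q k`, `2 ≤ k ≤ ⌊N^α⌋`, down to the grid `ℕ / N` and dropping the atoms beyond
`⌊N^α⌋` only removes mass from the atoms `k ≥ 2`; `Q_N(1)` receives all of it back. Hence the
`ℓ¹` distance is exactly twice the removed mass, which is less than `1/N` per rounded atom plus
the discarded tail, i.e. at most `N^α / N + ∑_{k > ⌊N^α⌋} Q(k)`.
-/

noncomputable def roundDown (N : ℕ) (x : ℝ) : ℝ := ⌊(N : ℝ) * x⌋₊ / N

section roundDown

variable {N : ℕ} {x : ℝ}

lemma roundDown_nonneg : 0 ≤ roundDown N x := by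
  unfold roundDown; positivity

lemma roundDown_le (hx : 0 ≤ x) : roundDown N x ≤ x :=
  div_le_of_le_mul₀ N.cast_nonneg hx ((Nat.floor_le (by positivity)).trans_eq (mul_comm _ _))

lemma sub_roundDown_le (hN : 0 < N) (x : ℝ) : x - roundDown N x ≤ 1 / N := by
  have hN' : (0 : ℝ) < N := by exact_mod_cast hN
  rw [roundDown, sub_le_iff_le_add, ← add_div, le_div_iff₀ hN']
  nlinarith [Nat.lt_floor_add_one ((N : ℝ) * x)]

lemma roundDown_mono : Monotone (roundDown N) := fun x y h => by
  unfold roundDown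
  gcongr

lemma floor_natCast_mul_le (hx : x ≤ 1) : ⌊(N : ℝ) * x⌋₊ ≤ N :=
  (Nat.floor_le_floor (mul_le_of_le_one_right N.cast_nonneg hx)).trans (Nat.floor_natCast N).le

lemma sum_roundDown (s : Finset ℕ) (f : ℕ → ℝ) :
    ∑ k ∈ s, roundDown N (f k) = ((∑ k ∈ s, ⌊(N : ℝ) * f k⌋₊ : ℕ) : ℝ) / N := by
  simp only [roundDown, Nat.cast_sum, sum_div]

end roundDown

/-- The discretization `Q_N` of the paper, with the cutoff `⌊N^α⌋` replaced by an arbitrary `M`. -/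
noncomputable def discretization (Q : ℕ → ℝ) (N M k : ℕ) : ℝ :=
  if k = 1 then 1 - ∑ j ∈ Icc 2 M, roundDown N (Q j)
  else if 2 ≤ k ∧ k ≤ M then roundDown N (Q k)
  else 0

lemma sum_Icc_two_eq_sum_range {β : Type*} [AddCommMonoid β] (f : ℕ → β) (M : ℕ) :
    ∑ j ∈ Icc 2 M, f j = ∑ k ∈ range (M - 1), f (k + 2) := by
  rw [← Ico_add_one_right_eq_Icc, sum_Ico_eq_sum_range, show M + 1 - 2 = M - 1 by omega]
  exact sum_congr rfl fun k _ => by rw [add_comm]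

lemma hasSum_add_two {G : Type*} [AddCommGroup G] [TopologicalSpace G] [IsTopologicalAddGroup G]
    {f : ℕ → G} {a : G} (hf : HasSum (fun k => f (k + 1)) a) :
    HasSum (fun k => f (k + 2)) (a - f 1) := by
  simpa using (hasSum_nat_add_iff' 1).2 hf

theorem tsum_abs_sub_eq_two_mul_tsum_sub {f g : ℕ → ℝ} {a : ℝ} (hf : HasSum f a)
    (hg : HasSum g a) (hle : ∀ k, g (k + 1) ≤ f (k + 1)) :
    ∑' k, |f k - g k| = 2 * ∑' k, (f (k + 1) - g (k + 1)) := by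
  have hfg : HasSum (fun k => f k - g k) 0 := by simpa using hf.sub hg
  have h0 : f 0 - g 0 = -∑' k, (f (k + 1) - g (k + 1)) := by
    linarith [hfg.summable.tsum_eq_zero_add, hfg.tsum_eq]
  have hnn : 0 ≤ ∑' k, (f (k + 1) - g (k + 1)) := tsum_nonneg fun k => sub_nonneg.2 (hle k)
  rw [hfg.summable.abs.tsum_eq_zero_add, h0, abs_neg, abs_of_nonneg hnn,
    tsum_congr fun k => abs_of_nonneg (sub_nonneg.2 (hle k)), two_mul]

section discretization

variable {Q : ℕ → ℝ} {N M : ℕ}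

lemma discretization_one :
    discretization Q N M 1 = 1 - ∑ k ∈ range (M - 1), roundDown N (Q (k + 2)) := by
  rw [discretization, if_pos rfl, sum_Icc_two_eq_sum_range]

lemma discretization_add_two (k : ℕ) :
    discretization Q N M (k + 2) = if k < M - 1 then roundDown N (Q (k + 2)) else 0 := by
  unfold discretization
  split_ifs <;> first | rfl | omega

lemma hasSum_discretization_add_two :
    HasSum (fun k => discretization Q N M (k + 2))
      (∑ k ∈ range (M - 1), roundDown N (Q (k + 2))) := by
  have h : HasSum (fun k => discretization Q N M (k + 2))
      (∑ k ∈ range (M - 1), discretization Q N M (k + 2)) :=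
    hasSum_sum_of_ne_finset_zero fun k hk => by
      rw [discretization_add_two, if_neg (mt mem_range.2 hk)]
  rwa [sum_congr rfl fun k hk => by rw [discretization_add_two, if_pos (mem_range.1 hk)]] at h

lemma hasSum_discretization : HasSum (fun k => discretization Q N M (k + 1)) 1 := by
  refine (hasSum_nat_add_iff' 1).1 ?_
  simpa [discretization_one] using hasSum_discretization_add_two (Q := Q) (N := N) (M := M)

lemma discretization_add_two_le (hQnn : ∀ k, 1 ≤ k → 0 ≤ Q k) (k : ℕ) :
    discretization Q N M (k + 2) ≤ Q (k + 2) := by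
  rw [discretization_add_two]
  split_ifs
  · exact roundDown_le (hQnn _ (by omega))
  · exact hQnn _ (by omega)

lemma le_discretization_one (hQnn : ∀ k, 1 ≤ k → 0 ≤ Q k)
    (hQ : HasSum (fun k => Q (k + 1)) 1) : Q 1 ≤ discretization Q N M 1 := by
  have hsum : ∑ k ∈ range (M - 1), roundDown N (Q (k + 2)) ≤ 1 - Q 1 :=
    (sum_le_sum fun k _ => roundDown_le (hQnn _ (by omega))).trans
      (sum_le_hasSum _ (fun k _ => hQnn _ (by omega)) (hasSum_add_two hQ))
  rw [discretization_one]
  linarith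

lemma discretization_succ_le (hQnn : ∀ k, 1 ≤ k → 0 ≤ Q k)
    (hQmono : ∀ k, 1 ≤ k → Q (k + 1) ≤ Q k) (hQ : HasSum (fun k => Q (k + 1)) 1) {k : ℕ}
    (hk : 1 ≤ k) : discretization Q N M (k + 1) ≤ discretization Q N M k := by
  have h1 := le_discretization_one (N := N) (M := M) hQnn hQ
  obtain rfl | ⟨j, rfl⟩ : k = 1 ∨ ∃ j, k = j + 2 :=
    (eq_or_lt_of_le hk).imp Eq.symm fun h => ⟨k - 2, by omega⟩
  · exact (discretization_add_two_le hQnn 0).trans ((hQmono 1 le_rfl).trans h1)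
  · rw [show j + 2 + 1 = j + 1 + 2 by ring, discretization_add_two, discretization_add_two]
    split_ifs
    · exact roundDown_mono (hQmono _ (by omega))
    · omega
    · exact roundDown_nonneg
    · rfl

lemma exists_discretization_eq_div (hN : 0 < N) (hQnn : ∀ k, 1 ≤ k → 0 ≤ Q k)
    (hQ : HasSum (fun k => Q (k + 1)) 1) {k : ℕ} (hk : 1 ≤ k) :
    ∃ i ≤ N, discretization Q N M k = i / N := by
  have hN' : (N : ℝ) ≠ 0 := by positivity
  obtain rfl | ⟨j, rfl⟩ : k = 1 ∨ ∃ j, k = j + 2 :=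
    (eq_or_lt_of_le hk).imp Eq.symm fun h => ⟨k - 2, by omega⟩
  · set m := ∑ k ∈ range (M - 1), ⌊(N : ℝ) * Q (k + 2)⌋₊
    have hd : discretization Q N M 1 = 1 - m / N := by
      rw [discretization_one, sum_roundDown]
    have hmN : m ≤ N := by
      have h0 := (hQnn 1 le_rfl).trans (le_discretization_one (N := N) (M := M) hQnn hQ)
      rw [hd, sub_nonneg, div_le_one₀ (by positivity)] at h0
      exact_mod_cast h0
    refine ⟨N - m, Nat.sub_le N m, ?_⟩
    rw [hd, Nat.cast_sub hmN, sub_div, div_self hN']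
  · rw [discretization_add_two]
    split_ifs
    · refine ⟨_, floor_natCast_mul_le ?_, rfl⟩
      exact le_hasSum hQ (j + 1) fun i _ => hQnn _ (by omega)
    · exact ⟨0, Nat.zero_le N, by simp⟩

theorem tsum_abs_sub_discretization_le (hN : 0 < N) (hM : 1 ≤ M)
    (hQnn : ∀ k, 1 ≤ k → 0 ≤ Q k) (hQ : HasSum (fun k => Q (k + 1)) 1) :
    ∑' k, |Q (k + 1) - discretization Q N M (k + 1)|
      ≤ 2 * ((M : ℝ) / N + ∑' k, Q (k + M + 1)) := by
  rw [tsum_abs_sub_eq_two_mul_tsum_sub hQ hasSum_discretization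
    fun k => discretization_add_two_le hQnn k]
  gcongr 2 * ?_
  obtain ⟨L, rfl⟩ : ∃ L, M = L + 1 := ⟨M - 1, by omega⟩
  have hs : Summable fun k => Q (k + 2) - discretization Q N (L + 1) (k + 2) :=
    ((hasSum_add_two hQ).sub (hasSum_discretization_add_two (N := N) (M := L + 1))).summable
  calc ∑' k, (Q (k + 1 + 1) - discretization Q N (L + 1) (k + 1 + 1))
      = ∑ k ∈ range L, (Q (k + 2) - discretization Q N (L + 1) (k + 2))
        + ∑' k, (Q (k + L + 2) - discretization Q N (L + 1) (k + L + 2)) :=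
        (hs.sum_add_tsum_nat_add L).symm
    _ ≤ ∑ _k ∈ range L, (1 / N : ℝ) + ∑' k, Q (k + (L + 1) + 1) := by
        refine add_le_add (sum_le_sum fun k hk => ?_) (tsum_congr fun k => ?_).le
        · rw [discretization_add_two, if_pos (by simpa using hk)]
          exact sub_roundDown_le hN _
        · rw [discretization_add_two, if_neg (by omega), sub_zero]
          ring_nf
    _ ≤ ((L + 1 : ℕ) : ℝ) / N + ∑' k, Q (k + (L + 1) + 1) := by
        rw [sum_const, card_range, nsmul_eq_mul, mul_one_div]
        gcongr
        exact_mod_cast L.le_succ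

end discretization

lemma floor_rpow_div_le_rpow_sub_one {N : ℕ} (hN : 0 < N) (α : ℝ) :
    (⌊(N : ℝ) ^ α⌋₊ : ℝ) / N ≤ (N : ℝ) ^ (α - 1) := by
  rw [rpow_sub_one (by positivity)]
  gcongr
  exact Nat.floor_le (by positivity)

lemma tendsto_two_mul_rpow_sub_one_add_tail {α : ℝ} (hα0 : 0 < α) (hα1 : α < 1) (Q : ℕ → ℝ) :
    Tendsto (fun N : ℕ => 2 * ((N : ℝ) ^ (α - 1) + ∑' k, Q (k + ⌊(N : ℝ) ^ α⌋₊ + 1)))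
      atTop (𝓝 0) := by
  have hpow : Tendsto (fun N : ℕ => (N : ℝ) ^ (α - 1)) atTop (𝓝 0) := by
    refine ((tendsto_rpow_neg_atTop (y := 1 - α) (by linarith)).comp
      tendsto_natCast_atTop_atTop).congr fun N => ?_
    simp
  have htail : Tendsto (fun N : ℕ => ∑' k, Q (k + ⌊(N : ℝ) ^ α⌋₊ + 1)) atTop (𝓝 0) :=
    (tendsto_sum_nat_add fun k => Q (k + 1)).comp <|
      tendsto_nat_floor_atTop.comp <| (tendsto_rpow_atTop hα0).comp tendsto_natCast_atTop_atTop
  simpa using (hpow.add htail).const_mul 2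

/-- Discretization of a non-increasing probability function on `ℕ = {1,2,...}`
(here `Q k` for `k ≥ 1`, with `Q` summing to 1): the discretized `Q_N` is again
a non-increasing probability function with values in `{0, 1/N, ..., 1}`, satisfies
the `ℓ¹`-bound `∑_k |Q(k) - Q_N(k)| ≤ 2(N^{α-1} + ∑_{k > ⌊N^α⌋} Q(k))`, and hence
`Q_N → Q` in `ℓ¹` as `N → ∞`. -/
theorem discretization_of_shape_measure (Q : ℕ → ℝ) (α : ℝ) (hα0 : 0 < α) (hα1 : α < 1)
    (hQnn : ∀ k, 1 ≤ k → 0 ≤ Q k)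
    (hQmono : ∀ k, 1 ≤ k → Q (k + 1) ≤ Q k)
    (hQsummable : Summable (fun k : ℕ => Q (k + 1)))
    (hQsum : ∑' k : ℕ, Q (k + 1) = 1)
    (QN : ℕ → ℕ → ℝ)
    (hQN : ∀ N k : ℕ, QN N k =
      if k = 1 then
        1 - ∑ j ∈ Finset.Icc 2 (⌊(N : ℝ) ^ α⌋₊), (⌊(N : ℝ) * Q j⌋₊ : ℝ) / N
      else if 2 ≤ k ∧ k ≤ ⌊(N : ℝ) ^ α⌋₊ then (⌊(N : ℝ) * Q k⌋₊ : ℝ) / N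
      else 0) :
    (∀ N : ℕ, 1 ≤ N →
      (∀ k, 1 ≤ k → QN N (k + 1) ≤ QN N k) ∧
      (∀ k, 1 ≤ k → ∃ i : ℕ, i ≤ N ∧ QN N k = (i : ℝ) / N) ∧
      (∑' k : ℕ, QN N (k + 1)) = 1 ∧
      (∑' k : ℕ, |Q (k + 1) - QN N (k + 1)|)
        ≤ 2 * ((N : ℝ) ^ (α - 1) + ∑' k : ℕ, Q (k + ⌊(N : ℝ) ^ α⌋₊ + 1))) ∧
    Tendsto (fun N : ℕ => ∑' k : ℕ, |Q (k + 1) - QN N (k + 1)|) atTop (nhds 0) := by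
  have hQ : HasSum (fun k => Q (k + 1)) 1 := hQsum ▸ hQsummable.hasSum
  have hQN' : ∀ N, QN N = discretization Q N ⌊(N : ℝ) ^ α⌋₊ := fun N => funext (hQN N)
  have hbound : ∀ N : ℕ, 1 ≤ N → ∑' k, |Q (k + 1) - QN N (k + 1)|
      ≤ 2 * ((N : ℝ) ^ (α - 1) + ∑' k, Q (k + ⌊(N : ℝ) ^ α⌋₊ + 1)) := by
    intro N hN
    have hM : 1 ≤ ⌊(N : ℝ) ^ α⌋₊ :=
      Nat.one_le_floor_iff _ |>.2 (one_le_rpow (by exact_mod_cast hN) hα0.le)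
    rw [hQN']
    refine (tsum_abs_sub_discretization_le hN hM hQnn hQ).trans ?_
    gcongr
    exact floor_rpow_div_le_rpow_sub_one hN α
  refine ⟨fun N hN => ⟨?_, ?_, ?_, hbound N hN⟩, ?_⟩
  · exact fun k hk => hQN' N ▸ discretization_succ_le hQnn hQmono hQ hk
  · exact fun k hk => hQN' N ▸ exists_discretization_eq_div hN hQnn hQ hk
  · exact hQN' N ▸ hasSum_discretization.tsum_eq
  · exact squeeze_zero' (.of_forall fun N => tsum_nonneg fun k => abs_nonneg _)
      (eventually_atTop.2 ⟨1, hbound⟩) (tendsto_two_mul_rpow_sub_one_add_tail hα0 hα1 Q)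
end

section
/- For d ≥ 3, β > 0 and ρ < ρ_c, with α > 0 the unique root of ρ = (4πβ)^{-d/2} g_{d/2}(α), the minimal value of S over sequences Q̂ of the form Q̂*(k)e^{-γk} with constraint \sum_k k·Q̂(k) = 1 is attained at γ = α and equals −(1/(ρ(4πβ)^{d/2}))·g_{(d+2)/2}(α) − α; consequently the specific free energy f(β,ρ) = (ρ/β)·S(Q_{α}) equals −(4πβ)^{-d/2}β^{-1} g_{(d+2)/2}(α) − ρα/β. -/
open Real

/-- The Bose function `g_s(α) = ∑_{k=1}^∞ k^{-s} e^{-αk}`. -/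
noncomputable def boseG (s α : ℝ) : ℝ :=
  ∑' k : ℕ, ((k : ℝ) + 1) ^ (-s) * Real.exp (-α * ((k : ℝ) + 1))

lemma summable_aux {s α : ℝ} (hs : 0 ≤ s) (hα : 0 < α) :
    Summable (fun k : ℕ => ((k : ℝ) + 1) ^ (-s) * Real.exp (-α * ((k : ℝ) + 1))) := by
  have hr0 : (0:ℝ) ≤ Real.exp (-α) := (Real.exp_pos _).le
  have hr1 : Real.exp (-α) < 1 := Real.exp_lt_one_iff.mpr (by linarith)
  have hg : Summable (fun k : ℕ => Real.exp (-α) ^ k * Real.exp (-α)) :=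
    (summable_geometric_of_lt_one hr0 hr1).mul_right _
  refine Summable.of_nonneg_of_le (fun k => by positivity) (fun k => ?_) hg
  have hx1 : (1:ℝ) ≤ (k:ℝ) + 1 := by
    have := Nat.cast_nonneg (α := ℝ) k; linarith
  have hp : ((k:ℝ)+1) ^ (-s) ≤ 1 :=
    Real.rpow_le_one_of_one_le_of_nonpos hx1 (neg_nonpos.mpr hs)
  have he : Real.exp (-α * ((k:ℝ)+1)) = Real.exp (-α) ^ k * Real.exp (-α) := by
    rw [← Real.exp_nat_mul, ← Real.exp_add]; ring_nf
  calc ((k:ℝ)+1) ^ (-s) * Real.exp (-α * ((k:ℝ)+1))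
      ≤ 1 * Real.exp (-α * ((k:ℝ)+1)) := by
        apply mul_le_mul_of_nonneg_right hp (Real.exp_pos _).le
    _ = Real.exp (-α) ^ k * Real.exp (-α) := by rw [one_mul, he]

lemma boseG_strictAnti {s γ α : ℝ} (hs : 0 ≤ s) (hγ : 0 < γ) (h : γ < α) :
    boseG s α < boseG s γ := by
  unfold boseG
  refine Summable.tsum_lt_tsum (i := 0) (fun k => ?_) ?_ (summable_aux hs (hγ.trans h)) (summable_aux hs hγ)
  · have hx : (0:ℝ) < (k:ℝ)+1 := by positivity
    have : -α * ((k:ℝ)+1) ≤ -γ * ((k:ℝ)+1) := by nlinarith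
    exact mul_le_mul_of_nonneg_left (Real.exp_le_exp.mpr this) (by positivity)
  · simp only [Nat.cast_zero, zero_add, mul_one]
    have hp : (0:ℝ) < (1:ℝ) ^ (-s) := by positivity
    exact mul_lt_mul_of_pos_left (Real.exp_lt_exp.mpr (by linarith)) hp

/-- For `d ≥ 3`, `β > 0` and `ρ < ρ_c`, with `α > 0` the root of
`ρ = (4πβ)^{-d/2} g_{d/2}(α)`: among the exponentially tilted sequences
`Q̂_γ(k) = Q̂*(k) e^{-γk}` the constraint `∑_k k Q̂_γ(k) = 1` forces `γ = α`,
the entropy functional value there is `S(Q̂_α) = -c·g_{(d+2)/2}(α) - α`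
(with `c = (ρ(4πβ)^{d/2})^{-1}`), and hence the specific free energy
`f(β,ρ) = (ρ/β)·S(Q̂_α)` equals `-(4πβ)^{-d/2} β^{-1} g_{(d+2)/2}(α) - ρα/β`. -/
theorem free_energy_subcritical (β ρ α : ℝ) (hβ : 0 < β) (hρ : 0 < ρ)
    (d : ℕ) (hd : 3 ≤ d)
    (hρc : ρ < (4 * π * β) ^ (-(d : ℝ) / 2) * (∑' k : ℕ, ((k : ℝ) + 1) ^ (-(d : ℝ) / 2)))
    (hα : 0 < α)
    (hroot : ρ = (4 * π * β) ^ (-(d : ℝ) / 2) * boseG ((d : ℝ) / 2) α)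
    (c : ℝ) (hc : c = 1 / (ρ * (4 * π * β) ^ ((d : ℝ) / 2)))
    (Qγ : ℝ → ℕ → ℝ)
    (hQγ : ∀ (γ : ℝ) (k : ℕ), Qγ γ k = c * (k : ℝ) ^ (-(1 + (d : ℝ) / 2)) * Real.exp (-γ * k))
    (S : (ℕ → ℝ) → ℝ)
    (hS : ∀ Q : ℕ → ℝ,
      S Q = ∑' k : ℕ, Q (k + 1) * (Real.log (Q (k + 1) / Qγ 0 (k + 1)) - 1)) :
    (∀ γ : ℝ, 0 < γ → (∑' k : ℕ, ((k : ℝ) + 1) * Qγ γ (k + 1)) = 1 → γ = α) ∧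
    (∑' k : ℕ, ((k : ℝ) + 1) * Qγ α (k + 1)) = 1 ∧
    S (Qγ α) = -c * boseG (((d : ℝ) + 2) / 2) α - α ∧
    (ρ / β) * S (Qγ α)
      = -(4 * π * β) ^ (-(d : ℝ) / 2) / β * boseG (((d : ℝ) + 2) / 2) α - ρ * α / β := by
  have h4πβ : (0:ℝ) < 4 * π * β := by positivity
  have hPpos : (0:ℝ) < (4 * π * β) ^ ((d : ℝ) / 2) := Real.rpow_pos_of_pos h4πβ _
  have hcpos : 0 < c := by rw [hc]; positivity
  have hds : (0:ℝ) ≤ (d:ℝ) / 2 := by positivity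
  -- pointwise form of Qγ
  have A : ∀ (γ : ℝ) (k : ℕ),
      Qγ γ (k + 1) = c * ((k:ℝ)+1) ^ (-(1 + (d : ℝ) / 2)) * Real.exp (-γ * ((k:ℝ)+1)) := by
    intro γ k; rw [hQγ]; push_cast; ring_nf
  -- constraint sum
  have hconstr : ∀ γ : ℝ,
      (∑' k : ℕ, ((k : ℝ) + 1) * Qγ γ (k + 1)) = c * boseG ((d : ℝ) / 2) γ := by
    intro γ
    rw [boseG, ← tsum_mul_left]
    congr 1; funext k
    rw [A γ k]
    have hx : (0:ℝ) < (k:ℝ)+1 := by positivity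
    have hmul : ((k:ℝ)+1) * ((k:ℝ)+1) ^ (-(1 + (d : ℝ) / 2)) = ((k:ℝ)+1) ^ (-((d:ℝ)/2)) := by
      rw [show -(1 + (d : ℝ) / 2) = (-1) + (-((d:ℝ)/2)) by ring, Real.rpow_add hx,
        Real.rpow_neg_one]
      field_simp
    calc ((k:ℝ)+1) * (c * ((k:ℝ)+1) ^ (-(1 + (d : ℝ) / 2)) * Real.exp (-γ * ((k:ℝ)+1)))
        = c * ((((k:ℝ)+1) * ((k:ℝ)+1) ^ (-(1 + (d : ℝ) / 2))) * Real.exp (-γ * ((k:ℝ)+1))) := by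
          ring
      _ = c * (((k:ℝ)+1) ^ (-((d:ℝ)/2)) * Real.exp (-γ * ((k:ℝ)+1))) := by rw [hmul]
  -- value of boseG at α
  have hgα : boseG ((d : ℝ) / 2) α = ρ * (4 * π * β) ^ ((d : ℝ) / 2) := by
    have hmul1 : (4 * π * β) ^ (-(d : ℝ) / 2) * (4 * π * β) ^ ((d : ℝ) / 2) = 1 := by
      rw [← Real.rpow_add h4πβ, show -(d:ℝ)/2 + (d:ℝ)/2 = 0 by ring, Real.rpow_zero]
    calc boseG ((d : ℝ) / 2) α
        = ((4 * π * β) ^ (-(d : ℝ) / 2) * boseG ((d : ℝ) / 2) α) * (4 * π * β) ^ ((d : ℝ) / 2) := by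
          rw [mul_comm ((4 * π * β) ^ (-(d : ℝ) / 2)), mul_assoc, hmul1, mul_one]
      _ = ρ * (4 * π * β) ^ ((d : ℝ) / 2) := by rw [← hroot]
  have hcg : c * boseG ((d : ℝ) / 2) α = 1 := by
    rw [hgα, hc]; field_simp
  have hconstrα : (∑' k : ℕ, ((k : ℝ) + 1) * Qγ α (k + 1)) = 1 := by
    rw [hconstr, hcg]
  -- uniqueness
  have huniq : ∀ γ : ℝ, 0 < γ → (∑' k : ℕ, ((k : ℝ) + 1) * Qγ γ (k + 1)) = 1 → γ = α := by
    intro γ hγ hsum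
    rw [hconstr] at hsum
    have heq : boseG ((d : ℝ) / 2) γ = boseG ((d : ℝ) / 2) α :=
      mul_left_cancel₀ (ne_of_gt hcpos) (by rw [hsum, hcg])
    rcases lt_trichotomy γ α with h | h | h
    · have := boseG_strictAnti hds hγ h; linarith
    · exact h
    · have := boseG_strictAnti hds hα h; linarith
  -- summabilities
  have hfS : Summable (fun k : ℕ => ((k : ℝ) + 1) * Qγ α (k + 1)) := by
    have e1 : (fun k : ℕ => ((k : ℝ) + 1) * Qγ α (k + 1))
        = fun k : ℕ => c * (((k:ℝ)+1) ^ (-((d:ℝ)/2)) * Real.exp (-α * ((k:ℝ)+1))) := by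
      funext k
      rw [A α k]
      have hx : (0:ℝ) < (k:ℝ)+1 := by positivity
      rw [show -(1 + (d : ℝ) / 2) = (-1) + (-((d:ℝ)/2)) by ring, Real.rpow_add hx,
        Real.rpow_neg_one]
      field_simp
    rw [e1]
    exact (summable_aux hds hα).mul_left c
  have hgS : Summable (fun k : ℕ => Qγ α (k + 1)) := by
    have e2 : (fun k : ℕ => Qγ α (k + 1))
        = fun k : ℕ => c * (((k:ℝ)+1) ^ (-(1 + (d:ℝ)/2)) * Real.exp (-α * ((k:ℝ)+1))) := by
      funext k; rw [A α k]; ring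
    rw [e2]
    exact (summable_aux (by positivity) hα).mul_left c
  -- entropy value
  have hQsum : (∑' k : ℕ, Qγ α (k + 1)) = c * boseG (((d : ℝ) + 2) / 2) α := by
    rw [boseG, ← tsum_mul_left]
    congr 1; funext k
    rw [A α k]
    have : -(((d : ℝ) + 2) / 2) = -(1 + (d:ℝ)/2) := by ring
    rw [this]; ring
  have hSval : S (Qγ α) = -c * boseG (((d : ℝ) + 2) / 2) α - α := by
    rw [hS]
    have hterm : ∀ k : ℕ, Qγ α (k + 1) * (Real.log (Qγ α (k + 1) / Qγ 0 (k + 1)) - 1)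
        = (-α) * (((k:ℝ)+1) * Qγ α (k + 1)) + (-1) * Qγ α (k + 1) := by
      intro k
      have hx : (0:ℝ) < (k:ℝ)+1 := by positivity
      have hpne : c * ((k:ℝ)+1) ^ (-(1 + (d : ℝ) / 2)) ≠ 0 := by positivity
      have hratio : Qγ α (k + 1) / Qγ 0 (k + 1) = Real.exp (-α * ((k:ℝ)+1)) := by
        rw [A α k, A 0 k, neg_zero, zero_mul, Real.exp_zero, mul_one]
        exact mul_div_cancel_left₀ _ hpne
      rw [hratio, Real.log_exp]; ring
    calc (∑' k : ℕ, Qγ α (k + 1) * (Real.log (Qγ α (k + 1) / Qγ 0 (k + 1)) - 1))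
        = ∑' k : ℕ, ((-α) * (((k:ℝ)+1) * Qγ α (k + 1)) + (-1) * Qγ α (k + 1)) := by
          congr 1; funext k; exact hterm k
      _ = (-α) * (∑' k : ℕ, ((k:ℝ)+1) * Qγ α (k + 1)) + (-1) * (∑' k : ℕ, Qγ α (k + 1)) := by
          rw [Summable.tsum_add (hfS.mul_left _) (hgS.mul_left _), tsum_mul_left, tsum_mul_left]
      _ = -c * boseG (((d : ℝ) + 2) / 2) α - α := by
          rw [hconstrα, hQsum]; ring
  refine ⟨huniq, hconstrα, hSval, ?_⟩
  rw [hSval, hc]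
  have hne : ρ * (4 * π * β) ^ ((d : ℝ) / 2) ≠ 0 := by positivity
  have hinv : (4 * π * β) ^ (-(d : ℝ) / 2) = ((4 * π * β) ^ ((d : ℝ) / 2))⁻¹ := by
    rw [neg_div, Real.rpow_neg h4πβ.le]
  rw [hinv]
  field_simp
end
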